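/- Let k ≥ 2, n ≥ 1, 0 ≤ m < n, and let j = gcd(1 + mk, n + 1). The group G = ⟨α, β, y | α = y^{-k}β^{k-1}, [β, y^k] = 1, β(αβ)^m = 1, α(αβ)^{n-m} = 1⟩ has y^k central, and G/⟨⟨y^k⟩⟩ ≅ Z_k * Z_j. In particular G is abelian if j = 1, and contains a non-abelian free subgroup if j ≥ 2 and (k,j) ≠ (2,2). -/

import Mathlib

/-!
Put `c = αβ`. The last two relations say `α = c^{-(n-m)}` and `β = c^{-m}`, so `c = c^{-n}`,
i.e. `c^{n+1} = 1`, and the first relation becomes `y^k = c^{-(1+mk)}`. Hence `y^k` is a power of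
`c`, which commutes with all three generators, and a homomorphism out of `G` is the same as a pair
`(Y, C)` with `C^{n+1} = 1` and `Y^k C^{1+mk} = 1`. Sending `y, c` to the generators of
`ℤ/k ∗ ℤ/j` therefore kills `y^k`, and the inverse exists because `ȳ^k = 1` and
`c̄^{gcd(1+mk, n+1)} = 1` in the quotient. If `j = 1`, Bézout makes `c` a power of `y`, so `G`
is cyclic. Otherwise one factor contains `b` with `b² ≠ 1`, and for `a ≠ 1` in the other factor,
ping-pong on reduced words shows that `abab⁻¹` and `ab⁻¹ab` generate a free group; a free
subgroup of a quotient lifts to `G`.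
-/

/-- `G = ⟨α, β, y | α = y^{-k}β^{k-1}, [β, y^k] = 1, β(αβ)^m = 1, α(αβ)^{n-m} = 1⟩`,
generators `α = of 0`, `β = of 1`, `y = of 2`. -/
def relsFam2 (k n m : ℕ) : Set (FreeGroup (Fin 3)) :=
  let a := FreeGroup.of (0 : Fin 3)
  let b := FreeGroup.of (1 : Fin 3)
  let y := FreeGroup.of (2 : Fin 3)
  {a * ((y ^ k)⁻¹ * b ^ (k - 1))⁻¹,
   b * y ^ k * b⁻¹ * (y ^ k)⁻¹,
   b * (a * b) ^ m,
   a * (a * b) ^ (n - m)}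

theorem MulAction.mapsTo_zpow_smul_union {G α : Type*} [Group G] [MulAction G α] {g : G}
    {S P N : Set α} (hP : Set.MapsTo (g • ·) (S ∪ P) P) (hN : Set.MapsTo (g⁻¹ • ·) (S ∪ N) N)
    {z : ℤ} (hz : z ≠ 0) : Set.MapsTo (g ^ z • ·) S (P ∪ N) := by
  have pow_succ_mapsTo : ∀ {h : G} {T : Set α}, Set.MapsTo (h • ·) (S ∪ T) T →
      ∀ n : ℕ, Set.MapsTo (h ^ (n + 1) • ·) S T := by
    intro h T hT n
    induction n with
    | zero => simpa using hT.mono_left Set.subset_union_left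
    | succ n ih =>
      intro w hw
      change h ^ (n + 1 + 1) • w ∈ T
      rw [pow_succ', mul_smul]
      exact hT (Or.inr (ih hw))
  rcases z with (_ | n) | n
  · exact absurd rfl hz
  · intro w hw
    change g ^ ((n + 1 : ℕ) : ℤ) • w ∈ P ∪ N
    rw [zpow_natCast]
    exact Or.inl (pow_succ_mapsTo hP n hw)
  · intro w hw
    rw [zpow_negSucc, ← inv_pow]
    exact Or.inr (pow_succ_mapsTo hN n hw)

namespace Monoid.CoprodI.Word

variable {ι : Type*} {H : ι → Type*}

section Monoid

variable [∀ i, Monoid (H i)]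

theorem eq_cons_of_toList_eq_cons {i : ι} {h : H i} {w : Word H} {l : List (Σ i, H i)}
    (hw : w.toList = ⟨i, h⟩ :: l) :
    ∃ (t : Word H) (ht : t.fstIdx ≠ some i) (h1 : h ≠ 1), w = cons h t ht h1 ∧ t.toList = l := by
  have hchain := w.chain_ne
  rw [hw] at hchain
  refine ⟨⟨l, fun x hx => w.ne_one x (by simp [hw, hx]), hchain.tail⟩, ?_,
    w.ne_one ⟨i, h⟩ (by simp [hw]), by ext1; simp [cons, hw], rfl⟩
  cases l with
  | nil => simp [fstIdx]
  | cons x xs => simpa [fstIdx] using (List.isChain_cons_cons.mp hchain).1.symm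

variable [DecidableEq ι] [∀ i, DecidableEq (H i)]

theorem toList_of_smul_of_fstIdx_ne {i : ι} {h : H i} {w : Word H} (hw : w.fstIdx ≠ some i)
    (h1 : h ≠ 1) : (of h • w).toList = ⟨i, h⟩ :: w.toList := by
  rw [← cons_eq_smul (h1 := hw) (h2 := h1)]
  rfl

theorem toList_of_smul_of_ne {i j : ι} {h : H i} {h' : H j} {w : Word H}
    {l : List (Σ i, H i)} (hw : w.toList = ⟨j, h'⟩ :: l) (hij : i ≠ j) (h1 : h ≠ 1) :
    (of h • w).toList = ⟨i, h⟩ :: ⟨j, h'⟩ :: l := by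
  rw [toList_of_smul_of_fstIdx_ne (by simp [fstIdx, hw, hij.symm]) h1, hw]

theorem toList_of_smul_of_mul_ne_one {i : ι} {h h' : H i} {w : Word H} {l : List (Σ i, H i)}
    (hw : w.toList = ⟨i, h'⟩ :: l) (hh : h * h' ≠ 1) :
    (of h • w).toList = ⟨i, h * h'⟩ :: l := by
  obtain ⟨t, ht, -, rfl, rfl⟩ := eq_cons_of_toList_eq_cons hw
  rw [cons_eq_smul, ← mul_smul, ← map_mul, toList_of_smul_of_fstIdx_ne ht hh]

theorem toList_of_smul_of_mul_eq_one {i : ι} {h h' : H i} {w : Word H} {l : List (Σ i, H i)}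
    (hw : w.toList = ⟨i, h'⟩ :: l) (hh : h * h' = 1) : (of h • w).toList = l := by
  obtain ⟨t, -, -, rfl, rfl⟩ := eq_cons_of_toList_eq_cons hw
  rw [cons_eq_smul, ← mul_smul, ← map_mul, hh, map_one, one_smul]

end Monoid

variable [∀ i, Group (H i)]

def startsWith {i j : ι} (a : H i) (b : H j) : Set (Word H) :=
  {w | ∃ l, w.toList = ⟨i, a⟩ :: ⟨j, b⟩ :: l}

theorem disjoint_startsWith {i j i' j' : ι} {a : H i} {b : H j} {a' : H i'} {b' : H j'}
    (h : ¬(Sigma.mk i a = ⟨i', a'⟩ ∧ Sigma.mk j b = ⟨j', b'⟩)) :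
    Disjoint (startsWith a b) (startsWith a' b') := by
  rw [Set.disjoint_left]
  rintro w ⟨l, hl⟩ ⟨l', hl'⟩
  rw [hl, List.cons.injEq, List.cons.injEq] at hl'
  exact h ⟨hl'.1, hl'.2.1⟩

end Monoid.CoprodI.Word

namespace Monoid.CoprodI

open scoped Pointwise

open Word

variable {ι : Type*} {H : ι → Type*} [∀ i, Group (H i)] {i j : ι}

/-- Positive powers of `pingPongElem a b` send `pingPongSet a b⁻¹` into the words starting with
`a b`, negative powers into those starting with `b a⁻¹`. -/
def pingPongSet (a : H i) (b : H j) : Set (Word H) := startsWith a b ∪ startsWith b a⁻¹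

theorem disjoint_pingPongSet (hij : i ≠ j) (a : H i) {b c : H j} (hbc : b ≠ c) :
    Disjoint (pingPongSet a b) (pingPongSet a c) := by
  refine .union_left (.union_right ?_ ?_) (.union_right ?_ ?_) <;>
    refine disjoint_startsWith ?_ <;> simp [hij, hij.symm, hbc]

def pingPongElem (a : H i) (b : H j) : CoprodI H := of a * of b * of a * of b⁻¹

theorem inv_pingPongElem (a : H i) (b : H j) :
    (pingPongElem a b)⁻¹ = of b * of a⁻¹ * of b⁻¹ * of a⁻¹ := by
  simp [pingPongElem, mul_assoc]

variable [DecidableEq ι] [∀ i, DecidableEq (H i)] {a : H i} {b : H j}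

theorem pingPongElem_smul_mem_startsWith (hij : i ≠ j) (ha : a ≠ 1) (hb : b ^ 2 ≠ 1)
    {w : Word H} (hw : w ∈ pingPongSet a b⁻¹ ∪ startsWith a b) :
    pingPongElem a b • w ∈ startsWith a b := by
  have hb1 : b ≠ 1 := by rintro rfl; simp at hb
  have hb' : b⁻¹ ≠ 1 := inv_ne_one.mpr hb1
  have hbb : b⁻¹ * b⁻¹ ≠ 1 := by rwa [← mul_inv_rev, inv_ne_one, ← sq]
  have of_head_i : ∀ {a' : H i} {l}, w.toList = ⟨i, a'⟩ :: l →
      pingPongElem a b • w ∈ startsWith a b :=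
    fun hw => ⟨_, by
      simp only [pingPongElem, mul_smul]
      exact toList_of_smul_of_ne (toList_of_smul_of_ne (toList_of_smul_of_ne
        (toList_of_smul_of_ne hw hij.symm hb') hij ha) hij.symm hb1) hij ha⟩
  rcases hw with (⟨l, hl⟩ | ⟨l, hl⟩) | ⟨l, hl⟩
  · exact of_head_i hl
  · exact ⟨_, by
      simp only [pingPongElem, mul_smul]
      exact toList_of_smul_of_ne (toList_of_smul_of_ne (toList_of_smul_of_ne
        (toList_of_smul_of_mul_ne_one hl hbb) hij ha) hij.symm hb1) hij ha⟩
  · exact of_head_i hl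

theorem inv_pingPongElem_smul_mem_startsWith (hij : i ≠ j) (ha : a ≠ 1) (hb : b ^ 2 ≠ 1)
    {w : Word H} (hw : w ∈ pingPongSet a b⁻¹ ∪ startsWith b a⁻¹) :
    (pingPongElem a b)⁻¹ • w ∈ startsWith b a⁻¹ := by
  have hb1 : b ≠ 1 := by rintro rfl; simp at hb
  have ha' : a⁻¹ ≠ 1 := inv_ne_one.mpr ha
  have hb' : b⁻¹ ≠ 1 := inv_ne_one.mpr hb1
  have hbb : b⁻¹ * b⁻¹ ≠ 1 := by rwa [← mul_inv_rev, inv_ne_one, ← sq]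
  have of_head_j : ∀ {b' : H j} {l}, w.toList = ⟨j, b'⟩ :: l →
      (pingPongElem a b)⁻¹ • w ∈ startsWith b a⁻¹ :=
    fun hw => ⟨_, by
      simp only [inv_pingPongElem, mul_smul]
      exact toList_of_smul_of_ne (toList_of_smul_of_ne (toList_of_smul_of_ne
        (toList_of_smul_of_ne hw hij ha') hij.symm hb') hij ha') hij.symm hb1⟩
  rcases hw with (⟨l, hl⟩ | ⟨l, hl⟩) | ⟨l, hl⟩
  · exact ⟨_, by
      simp only [inv_pingPongElem, mul_smul]
      exact toList_of_smul_of_ne (toList_of_smul_of_ne (toList_of_smul_of_mul_ne_one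
        (toList_of_smul_of_mul_eq_one hl (inv_mul_cancel a)) hbb) hij ha') hij.symm hb1⟩
  · exact of_head_j hl
  · exact of_head_j hl

theorem zpow_pingPongElem_smul_subset (hij : i ≠ j) (ha : a ≠ 1) (hb : b ^ 2 ≠ 1) {z : ℤ}
    (hz : z ≠ 0) : pingPongElem a b ^ z • pingPongSet a b⁻¹ ⊆ pingPongSet a b :=
  Set.smul_set_subset_iff.mpr <| MulAction.mapsTo_zpow_smul_union
    (fun _ hw => pingPongElem_smul_mem_startsWith hij ha hb hw)
    (fun _ hw => inv_pingPongElem_smul_mem_startsWith hij ha hb hw) hz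

theorem injective_lift_pingPongElem (hij : i ≠ j) (ha : a ≠ 1) (hb : b ^ 2 ≠ 1) :
    Function.Injective (FreeGroup.lift fun t : Fin 2 => pingPongElem a (![b, b⁻¹] t)) := by
  set c : Fin 2 → H j := ![b, b⁻¹]
  have hc : ∀ t, c t ^ 2 ≠ 1 := by
    intro t; fin_cases t
    · exact hb
    · simpa [c, inv_pow] using hb
  have hc1 : ∀ t, c t ≠ 1 := fun t h => hc t (by simp [h])
  have hc_swap : ∀ t s, t ≠ s → c s = (c t)⁻¹ := by
    intro t s hts; fin_cases t <;> fin_cases s <;> simp_all [c]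
  have hfactor : FreeGroup.lift (fun t => pingPongElem a (c t)) =
      (lift fun t => FreeGroup.lift fun _ => pingPongElem a (c t)).comp
        freeGroupEquivCoprodI.toMonoidHom := by
    ext; simp
  rw [hfactor, MonoidHom.coe_comp]
  refine (lift_injective_of_ping_pong _ ?_ (fun t => pingPongSet a (c t)) ?_ ?_ ?_).comp
    freeGroupEquivCoprodI.injective
  · exact Or.inr ⟨0, (Cardinal.natCast_lt_aleph0 (n := 3)).le.trans (Cardinal.aleph0_le_mk _)⟩
  · exact fun t => ⟨of a • of (c t) • Word.empty, .inl ⟨[], toList_of_smul_of_ne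
      (toList_of_smul_of_fstIdx_ne (by simp [fstIdx, Word.empty]) (hc1 t)) hij ha⟩⟩
  · intro t s hts
    refine disjoint_pingPongSet hij a ?_
    rw [hc_swap t s hts]
    exact fun h => hc t (by rw [sq]; exact eq_inv_iff_mul_eq_one.mp h)
  · intro t s hts
    refine FreeGroup.freeGroupUnitEquivInt.forall_congr_left.mpr fun z hz => ?_
    have hz0 : z ≠ 0 := by rintro rfl; exact hz (zpow_zero _)
    change FreeGroup.lift (fun _ => pingPongElem a (c t)) (.of () ^ z) • pingPongSet a (c s) ⊆ _
    rw [map_zpow, FreeGroup.lift_apply_of, hc_swap t s hts]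
    exact zpow_pingPongElem_smul_subset hij ha (hc t) hz0

end Monoid.CoprodI

namespace Monoid.Coprod

universe u

variable {M N : Type u} [Group M] [Group N]

theorem exists_injective_freeGroup_of_sq_ne_one_right {a : M} {b : N} (ha : a ≠ 1)
    (hb : b ^ 2 ≠ 1) : ∃ f : FreeGroup (Fin 2) →* M ∗ N, Function.Injective f := by
  classical
  -- Reduced words live on the indexed free product, so we map `M ∗ N` to it over `Bool`.
  let H : Bool → Type u := fun t => cond t M N
  let _ : ∀ t, Group (H t) := fun t => @Bool.rec (fun t => Group (H t)) (inferInstance : Group N)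
    (inferInstance : Group M) t
  let Λ : M ∗ N →* CoprodI H :=
    lift (CoprodI.of (M := H) (i := true)) (CoprodI.of (M := H) (i := false))
  let c : Fin 2 → N := ![b, b⁻¹]
  let f : FreeGroup (Fin 2) →* M ∗ N :=
    FreeGroup.lift fun t => inl a * inr (c t) * inl a * inr (c t)⁻¹
  have hΛf : Λ.comp f = FreeGroup.lift fun t =>
      CoprodI.pingPongElem (H := H) (i := true) (j := false) a (c t) := by
    ext t
    simp [f, Λ, CoprodI.pingPongElem]
  refine ⟨f, Function.Injective.of_comp (f := Λ) ?_⟩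
  rw [← MonoidHom.coe_comp, hΛf]
  exact CoprodI.injective_lift_pingPongElem (by decide) ha hb

theorem exists_injective_freeGroup {a : M} {b : N} (ha : a ≠ 1) (hb : b ≠ 1)
    (h : a ^ 2 ≠ 1 ∨ b ^ 2 ≠ 1) : ∃ f : FreeGroup (Fin 2) →* M ∗ N, Function.Injective f := by
  rcases h with ha2 | hb2
  · obtain ⟨f, hf⟩ := exists_injective_freeGroup_of_sq_ne_one_right hb ha2
    exact ⟨(swap N M).comp f, swap_injective.comp hf⟩
  · exact exists_injective_freeGroup_of_sq_ne_one_right ha hb2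

end Monoid.Coprod

theorem FreeGroup.exists_injective_of_surjective {α G Q : Type*} [Group G] [Group Q]
    {p : G →* Q} (hp : Function.Surjective p) {f : FreeGroup α →* Q}
    (hf : Function.Injective f) : ∃ g : FreeGroup α →* G, Function.Injective g := by
  let g : FreeGroup α →* G := FreeGroup.lift fun x => Function.surjInv hp (f (.of x))
  have hpg : p.comp g = f := FreeGroup.ext_hom _ _ fun x => by simp [g, Function.surjInv_eq hp]
  refine ⟨g, Function.Injective.of_comp (f := p) ?_⟩
  rwa [← MonoidHom.coe_comp, hpg]

theorem Subgroup.pow_gcd_mem {G : Type*} [Group G] (H : Subgroup G) {x : G} {a b : ℕ}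
    (ha : x ^ a ∈ H) (hb : x ^ b ∈ H) : x ^ a.gcd b ∈ H := by
  rw [← zpow_natCast, Nat.gcd_eq_gcd_ab, zpow_add, zpow_mul, zpow_mul, zpow_natCast,
    zpow_natCast]
  exact H.mul_mem (H.zpow_mem ha _) (H.zpow_mem hb _)

theorem zpow_eq_one_of_dvd {G : Type*} [Group G] {x : G} {d : ℕ} (hx : x ^ d = 1) {e : ℤ}
    (he : (d : ℤ) ∣ e) : x ^ e = 1 := by
  obtain ⟨t, rfl⟩ := he
  rw [zpow_mul, zpow_natCast, hx, one_zpow]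

theorem orderOf_ofAdd_one (d : ℕ) : orderOf (Multiplicative.ofAdd (1 : ZMod d)) = d := by
  rw [orderOf_ofAdd_eq_addOrderOf, ZMod.addOrderOf_one]

theorem mem_zpowers_ofAdd_one {d : ℕ} (x : Multiplicative (ZMod d)) :
    x ∈ Subgroup.zpowers (Multiplicative.ofAdd 1) := by
  obtain ⟨z, hz⟩ := ZMod.intCast_surjective x.toAdd
  exact Subgroup.mem_zpowers_iff.mpr ⟨z, by rw [← ofAdd_zsmul, zsmul_one, hz]; rfl⟩

theorem ofAdd_one_pow_ne_one {d t : ℕ} (ht : 0 < t) (htd : t < d) :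
    Multiplicative.ofAdd (1 : ZMod d) ^ t ≠ 1 :=
  pow_ne_one_of_lt_orderOf ht.ne' (by rwa [orderOf_ofAdd_one])

theorem ofAdd_one_pow_eq_one {d t : ℕ} (h : d ∣ t) :
    Multiplicative.ofAdd (1 : ZMod d) ^ t = 1 :=
  orderOf_dvd_iff_pow_eq_one.mp ((orderOf_ofAdd_one d).symm ▸ h)

namespace relsFam2

open PresentedGroup

variable {k n m : ℕ}

local notation "G" => PresentedGroup (relsFam2 k n m)

variable (k n m) in
def αβ : PresentedGroup (relsFam2 k n m) := of 0 * of 1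

theorem of_zero_eq_of_two_pow : (of 0 : G) = (of 2 ^ k)⁻¹ * of 1 ^ (k - 1) := by
  have h := mk_eq_mk_of_mul_inv_mem (rels := relsFam2 k n m)
    (x := FreeGroup.of 0) (y := (FreeGroup.of 2 ^ k)⁻¹ * FreeGroup.of 1 ^ (k - 1))
    (by simp only [relsFam2]; exact Set.mem_insert _ _)
  rwa [map_mul, map_inv, map_pow, map_pow] at h

theorem of_one_eq_αβ_pow_inv : (of 1 : G) = (αβ k n m ^ m)⁻¹ := by
  have h := one_of_mem (rels := relsFam2 k n m)
    (x := FreeGroup.of 1 * (FreeGroup.of 0 * FreeGroup.of 1) ^ m) (by simp [relsFam2])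
  rw [map_mul, map_pow, map_mul] at h
  exact eq_inv_of_mul_eq_one_left h

theorem of_zero_eq_αβ_pow_inv : (of 0 : G) = (αβ k n m ^ (n - m))⁻¹ := by
  have h := one_of_mem (rels := relsFam2 k n m)
    (x := FreeGroup.of 0 * (FreeGroup.of 0 * FreeGroup.of 1) ^ (n - m)) (by simp [relsFam2])
  rw [map_mul, map_pow, map_mul] at h
  exact eq_inv_of_mul_eq_one_left h

theorem αβ_pow_succ (hm : m ≤ n) : αβ k n m ^ (n + 1) = 1 := by
  have h : αβ k n m = (αβ k n m ^ n)⁻¹ := by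
    conv_lhs => rw [αβ, of_zero_eq_αβ_pow_inv, of_one_eq_αβ_pow_inv]
    rw [← mul_inv_rev, ← pow_add, Nat.add_sub_cancel' hm]
  rw [pow_succ']
  exact mul_eq_one_iff_eq_inv.mpr h

theorem of_two_pow_eq_αβ_pow_inv (hm : m ≤ n) (hk : 1 ≤ k) :
    (of 2 : G) ^ k = (αβ k n m ^ (1 + m * k))⁻¹ := by
  have h := of_zero_eq_of_two_pow (k := k) (n := n) (m := m)
  rw [eq_inv_mul_iff_mul_eq] at h
  rw [eq_mul_inv_of_mul_eq h, ← mul_eq_one_iff_eq_inv, of_zero_eq_αβ_pow_inv,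
    of_one_eq_αβ_pow_inv]
  simp only [← zpow_natCast, ← zpow_neg, ← zpow_mul, ← zpow_add]
  refine zpow_eq_one_of_dvd (αβ_pow_succ hm) ⟨1, ?_⟩
  push_cast [Nat.cast_sub hm, Nat.cast_sub hk]
  ring

theorem of_two_pow_mem_center (hm : m ≤ n) (hk : 1 ≤ k) :
    (of 2 : G) ^ k ∈ Subgroup.center G := by
  refine Subgroup.mem_center_iff.mpr fun g =>
    Subgroup.mem_centralizer_singleton_iff.mp (generated_by _ _ (fun i => ?_) g)
  rw [Subgroup.mem_centralizer_singleton_iff]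
  fin_cases i
  · show (of 0 : G) * of 2 ^ k = of 2 ^ k * of 0
    rw [of_zero_eq_αβ_pow_inv, of_two_pow_eq_αβ_pow_inv hm hk]
    exact (Commute.pow_pow_self _ _ _).inv_inv.eq
  · show (of 1 : G) * of 2 ^ k = of 2 ^ k * of 1
    rw [of_one_eq_αβ_pow_inv, of_two_pow_eq_αβ_pow_inv hm hk]
    exact (Commute.pow_pow_self _ _ _).inv_inv.eq
  · exact ((Commute.refl _).pow_right k).eq

theorem lift_rels_eq_one {Q : Type*} [Group Q] {Y C : Q} (hm : m ≤ n) (hk : 1 ≤ k)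
    (hC : C ^ (n + 1) = 1) (hYC : Y ^ k * C ^ (1 + m * k) = 1) :
    ∀ r ∈ relsFam2 k n m, FreeGroup.lift ![(C ^ (n - m))⁻¹, (C ^ m)⁻¹, Y] r = 1 := by
  have hY : Y ^ k = (C ^ (1 + m * k))⁻¹ := eq_inv_of_mul_eq_one_left hYC
  set f : Fin 3 → Q := ![(C ^ (n - m))⁻¹, (C ^ m)⁻¹, Y]
  have f0 : f 0 = (C ^ (n - m))⁻¹ := rfl
  have f1 : f 1 = (C ^ m)⁻¹ := rfl
  have f2 : f 2 = Y := rfl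
  simp only [relsFam2, Set.mem_insert_iff, Set.mem_singleton_iff]
  rintro r (rfl | rfl | rfl | rfl) <;>
    simp only [map_mul, map_inv, map_pow, FreeGroup.lift_apply_of, f0, f1, f2, hY] <;>
    simp only [← zpow_natCast, ← zpow_neg, ← zpow_mul, ← zpow_add]
  · exact zpow_eq_one_of_dvd hC ⟨-1, by push_cast [Nat.cast_sub hm, Nat.cast_sub hk]; ring⟩
  · exact zpow_eq_one_of_dvd hC ⟨0, by ring⟩
  · exact zpow_eq_one_of_dvd hC ⟨-m, by push_cast [Nat.cast_sub hm]; ring⟩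
  · exact zpow_eq_one_of_dvd hC ⟨-(n - m : ℕ), by push_cast [Nat.cast_sub hm]; ring⟩

theorem mem_zpowers_of_two_of_coprime (hm : m ≤ n) (hk : 1 ≤ k)
    (h : Nat.gcd (1 + m * k) (n + 1) = 1) (x : G) : x ∈ Subgroup.zpowers (of 2) := by
  have hαβ : αβ k n m ∈ Subgroup.zpowers (of 2) := by
    have hpow : αβ k n m ^ (1 + m * k) ∈ Subgroup.zpowers (of 2) := by
      rw [← inv_inv (αβ k n m ^ _), ← of_two_pow_eq_αβ_pow_inv hm hk]
      exact inv_mem (pow_mem (Subgroup.mem_zpowers _) k)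
    have := Subgroup.pow_gcd_mem _ hpow (by rw [αβ_pow_succ hm]; exact one_mem _)
    rwa [h, pow_one] at this
  refine generated_by _ _ (fun i => ?_) x
  fin_cases i
  · show (of 0 : G) ∈ _
    rw [of_zero_eq_αβ_pow_inv]
    exact inv_mem (pow_mem hαβ _)
  · show (of 1 : G) ∈ _
    rw [of_one_eq_αβ_pow_inv]
    exact inv_mem (pow_mem hαβ _)
  · exact Subgroup.mem_zpowers _

theorem mul_comm_of_coprime (hm : m ≤ n) (hk : 1 ≤ k) (h : Nat.gcd (1 + m * k) (n + 1) = 1)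
    (x y : G) : x * y = y * x := by
  obtain ⟨s, rfl⟩ := Subgroup.mem_zpowers_iff.mp (mem_zpowers_of_two_of_coprime hm hk h x)
  obtain ⟨t, rfl⟩ := Subgroup.mem_zpowers_iff.mp (mem_zpowers_of_two_of_coprime hm hk h y)
  exact (Commute.zpow_zpow_self _ s t).eq

section Quotient

open Monoid.Coprod

variable {j : ℕ}

local notation "N" => Subgroup.normalClosure ({(of 2 : G) ^ k} : Set G)

local notation "Zk∗Zj" => Multiplicative (ZMod k) ∗ Multiplicative (ZMod j)

theorem mk_of_two_pow_eq_one : ((of 2 : G) : G ⧸ N) ^ k = 1 :=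
  (QuotientGroup.eq_one_iff _).mpr (Subgroup.subset_normalClosure rfl)

theorem mk_αβ_pow_eq_one (hm : m ≤ n) (hk : 1 ≤ k) (hj : j = Nat.gcd (1 + m * k) (n + 1)) :
    (αβ k n m : G ⧸ N) ^ j = 1 := by
  have h1 : (αβ k n m : G ⧸ N) ^ (1 + m * k) = 1 := by
    rw [← QuotientGroup.mk_pow, ← inv_inv (αβ k n m ^ _), ← of_two_pow_eq_αβ_pow_inv hm hk,
      QuotientGroup.mk_inv, QuotientGroup.mk_pow, mk_of_two_pow_eq_one, inv_one]
  have h2 : (αβ k n m : G ⧸ N) ^ (n + 1) = 1 := by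
    rw [← QuotientGroup.mk_pow, αβ_pow_succ hm, QuotientGroup.mk_one]
  rw [hj]
  exact pow_gcd_eq_one.mpr ⟨h1, h2⟩

section Isomorphism

variable (hm : m ≤ n) (hk : 1 ≤ k) (hj : j = Nat.gcd (1 + m * k) (n + 1))

def toCoprod : G ⧸ N →* Zk∗Zj :=
  have hY : (inl (.ofAdd 1) : Zk∗Zj) ^ k = 1 := by
    rw [← map_pow, ofAdd_one_pow_eq_one dvd_rfl, map_one]
  have hC : ∀ {t}, j ∣ t → (inr (.ofAdd 1) : Zk∗Zj) ^ t = 1 := fun h => by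
    rw [← map_pow, ofAdd_one_pow_eq_one h, map_one]
  have hYC : (inl (.ofAdd 1) : Zk∗Zj) ^ k * inr (.ofAdd 1) ^ (1 + m * k) = 1 := by
    rw [hY, hC (hj ▸ Nat.gcd_dvd_left _ _), one_mul]
  QuotientGroup.lift N
    (toGroup (lift_rels_eq_one hm hk (hC (hj ▸ Nat.gcd_dvd_right _ _)) hYC)) <|
    Subgroup.normalClosure_le_normal <| Set.singleton_subset_iff.mpr <| by simpa using hY

theorem toCoprod_mk_of_two :
    toCoprod hm hk hj ((of 2 : G) : G ⧸ N) = inl (.ofAdd 1) := by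
  simp [toCoprod]

theorem toCoprod_mk_αβ :
    toCoprod hm hk hj (αβ k n m : G ⧸ N) = inr (.ofAdd 1) := by
  simp only [toCoprod, αβ, QuotientGroup.mk_mul, map_mul, QuotientGroup.lift_mk, toGroup.of,
    Matrix.cons_val_zero, Matrix.cons_val_one]
  rw [← mul_inv_rev, ← pow_add, Nat.add_sub_cancel' hm]
  refine inv_eq_of_mul_eq_one_left ?_
  rw [← pow_succ', ← map_pow, ofAdd_one_pow_eq_one (hj ▸ Nat.gcd_dvd_right _ _), map_one]

noncomputable def ofCoprod : Zk∗Zj →* G ⧸ N :=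
  lift
    (monoidHomOfForallMemZpowers mem_zpowers_ofAdd_one (g' := ((of 2 : G) : G ⧸ N))
      (by rw [orderOf_ofAdd_one]; exact orderOf_dvd_of_pow_eq_one mk_of_two_pow_eq_one))
    (monoidHomOfForallMemZpowers mem_zpowers_ofAdd_one (g' := (αβ k n m : G ⧸ N))
      (by rw [orderOf_ofAdd_one]; exact orderOf_dvd_of_pow_eq_one (mk_αβ_pow_eq_one hm hk hj)))

theorem ofCoprod_inl :
    ofCoprod hm hk hj (inl (.ofAdd 1)) = ((of 2 : G) : G ⧸ N) := by
  simp only [ofCoprod, lift_apply_inl, monoidHomOfForallMemZpowers_apply_gen]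

theorem ofCoprod_inr :
    ofCoprod hm hk hj (inr (.ofAdd 1)) = (αβ k n m : G ⧸ N) := by
  simp only [ofCoprod, lift_apply_inr, monoidHomOfForallMemZpowers_apply_gen]

theorem ofCoprod_comp_toCoprod :
    (ofCoprod hm hk hj).comp (toCoprod hm hk hj) = MonoidHom.id _ := by
  have hαβ : ofCoprod hm hk hj (toCoprod hm hk hj (αβ k n m)) = αβ k n m := by
    rw [toCoprod_mk_αβ, ofCoprod_inr]
  refine QuotientGroup.monoidHom_ext _ (PresentedGroup.ext fun i => ?_)
  fin_cases i
  · show ofCoprod hm hk hj (toCoprod hm hk hj (of 0 : G)) = (of 0 : G)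
    simp only [of_zero_eq_αβ_pow_inv, QuotientGroup.mk_inv, QuotientGroup.mk_pow, map_inv, map_pow,
      hαβ]
  · show ofCoprod hm hk hj (toCoprod hm hk hj (of 1 : G)) = (of 1 : G)
    simp only [of_one_eq_αβ_pow_inv, QuotientGroup.mk_inv, QuotientGroup.mk_pow, map_inv, map_pow,
      hαβ]
  · show ofCoprod hm hk hj (toCoprod hm hk hj (of 2 : G)) = (of 2 : G)
    rw [toCoprod_mk_of_two, ofCoprod_inl]

theorem toCoprod_comp_ofCoprod :
    (toCoprod hm hk hj).comp (ofCoprod hm hk hj) = MonoidHom.id _ := by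
  refine hom_ext ?_ ?_ <;>
    refine (MonoidHom.eq_iff_eq_on_generator mem_zpowers_ofAdd_one _ _).mpr ?_
  · simp only [MonoidHom.comp_apply, ofCoprod_inl, toCoprod_mk_of_two, MonoidHom.id_apply]
  · simp only [MonoidHom.comp_apply, ofCoprod_inr, toCoprod_mk_αβ, MonoidHom.id_apply]

noncomputable def quotientMulEquiv : G ⧸ N ≃* Zk∗Zj :=
  MonoidHom.toMulEquiv (toCoprod hm hk hj) (ofCoprod hm hk hj) (ofCoprod_comp_toCoprod hm hk hj)
    (toCoprod_comp_ofCoprod hm hk hj)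

end Isomorphism

theorem exists_injective_freeGroup (hm : m ≤ n) (hk : 2 ≤ k)
    (hj : j = Nat.gcd (1 + m * k) (n + 1)) (hj2 : 2 ≤ j) (hkj : ¬(k = 2 ∧ j = 2)) :
    ∃ f : FreeGroup (Fin 2) →* G, Function.Injective f := by
  have hsq : Multiplicative.ofAdd (1 : ZMod k) ^ 2 ≠ 1 ∨
      Multiplicative.ofAdd (1 : ZMod j) ^ 2 ≠ 1 := by
    rcases Nat.lt_or_ge 2 j with h | h
    · exact .inr (ofAdd_one_pow_ne_one two_pos h)
    · exact .inl (ofAdd_one_pow_ne_one two_pos (by omega))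
  obtain ⟨f, hf⟩ := Monoid.Coprod.exists_injective_freeGroup
    (by simpa using ofAdd_one_pow_ne_one one_pos hk)
    (by simpa using ofAdd_one_pow_ne_one one_pos hj2) hsq
  exact FreeGroup.exists_injective_of_surjective (QuotientGroup.mk'_surjective N)
    (f := (quotientMulEquiv hm (by omega) hj).symm.toMonoidHom.comp f)
    ((quotientMulEquiv hm (by omega) hj).symm.injective.comp hf)

end Quotient

end relsFam2

theorem stmt_14_general (k n m : ℕ) (hk : 2 ≤ k) (hm : m < n)
    (j : ℕ) (hj : j = Nat.gcd (1 + m * k) (n + 1)) :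
    ((PresentedGroup.of 2 : PresentedGroup (relsFam2 k n m)) ^ k ∈
      Subgroup.center (PresentedGroup (relsFam2 k n m))) ∧
    Nonempty
      ((PresentedGroup (relsFam2 k n m) ⧸
          Subgroup.normalClosure
            ({(PresentedGroup.of 2 : PresentedGroup (relsFam2 k n m)) ^ k} :
              Set (PresentedGroup (relsFam2 k n m)))) ≃*
        Monoid.Coprod (Multiplicative (ZMod k)) (Multiplicative (ZMod j))) ∧
    (j = 1 → ∀ x y : PresentedGroup (relsFam2 k n m), x * y = y * x) ∧
    (2 ≤ j → ¬(k = 2 ∧ j = 2) →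
      ∃ f : FreeGroup (Fin 2) →* PresentedGroup (relsFam2 k n m),
        Function.Injective f) := by
  have hk1 : 1 ≤ k := by omega
  exact ⟨relsFam2.of_two_pow_mem_center hm.le hk1,
    ⟨relsFam2.quotientMulEquiv hm.le hk1 hj⟩,
    fun h1 => relsFam2.mul_comm_of_coprime hm.le hk1 (hj ▸ h1),
    relsFam2.exists_injective_freeGroup hm.le hk hj⟩

/-- In the group of the curves of family (2), `y^k` is central, the quotient by its
normal closure is `ℤ/k ∗ ℤ/j` with `j = gcd(1 + mk, n + 1)`; `G` is abelian if
`j = 1` and contains a non-abelian free subgroup if `j ≥ 2` and `(k, j) ≠ (2, 2)`. -/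
theorem stmt_14 (k n m : ℕ) (hk : 2 ≤ k) (hn : 1 ≤ n) (hm : m < n)
    (j : ℕ) (hj : j = Nat.gcd (1 + m * k) (n + 1)) :
    ((PresentedGroup.of 2 : PresentedGroup (relsFam2 k n m)) ^ k ∈
      Subgroup.center (PresentedGroup (relsFam2 k n m))) ∧
    Nonempty
      ((PresentedGroup (relsFam2 k n m) ⧸
          Subgroup.normalClosure
            ({(PresentedGroup.of 2 : PresentedGroup (relsFam2 k n m)) ^ k} :
              Set (PresentedGroup (relsFam2 k n m)))) ≃*
        Monoid.Coprod (Multiplicative (ZMod k)) (Multiplicative (ZMod j))) ∧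
    (j = 1 → ∀ x y : PresentedGroup (relsFam2 k n m), x * y = y * x) ∧
    (2 ≤ j → ¬(k = 2 ∧ j = 2) →
      ∃ f : FreeGroup (Fin 2) →* PresentedGroup (relsFam2 k n m),
        Function.Injective f) :=
  stmt_14_general k n m hk hm j hj
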